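/- Let f : ℝⁿ → ℝ be C², x a regular point of f at which the Weingarten map of the level set is invertible, t = f(x), u = ν_f(x). Choose a C¹ direct orthonormal frame (v₁,…,v_{n−1}, ν_f) near x. Then the determinant of the matrix of d_xΨ_f (where Ψ_f = (ν_f, f)) in this frame and the determinant of the matrix of the Weingarten map d_xν_t : T_xF_t → T_uS^{n−1} in the frame (v₁,…,v_{n−1}) have the same sign. Consequently the local degree of Ψ_f at (u,t) equals the local degree of ν_t at u. -/

import Mathlib

open scoped RealInnerProductSpace Topology

/-!
In the frame, `d_x f = ⟪∇f x, ·⟫ = ‖∇f x‖ ⟪v_n, ·⟫`, so the last row of `A` is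
`(0, …, 0, ‖∇f x‖)` and expanding along it gives `det A = ‖∇f x‖ · det B`.
Since `‖ν‖ ≡ 1` near `x`, `d_xν` takes values in `ν(x)^⊥`; together with its injectivity on
`T_xF_t = ν(x)^⊥` this makes `B` (the compression of `d_xν` to `ν(x)^⊥`) invertible.
Hence `det A · det B = ‖∇f x‖ (det B)² > 0`.
-/

theorem Matrix.det_eq_mul_det_submatrix_castSucc {R : Type*} [CommRing R] {n : ℕ}
    (A : Matrix (Fin (n + 1)) (Fin (n + 1)) R) {c : R}
    (hA : A (Fin.last n) = Pi.single (Fin.last n) c) :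
    A.det = c * (A.submatrix Fin.castSucc Fin.castSucc).det := by
  rw [Matrix.det_succ_row A (Fin.last n),
    Fintype.sum_eq_single (Fin.last n) fun j hj => by simp [hA, hj]]
  simp [hA, Fin.succAbove_last]

theorem ContDiff.gradient {F : Type*} [NormedAddCommGroup F] [InnerProductSpace ℝ F]
    [CompleteSpace F] {f : F → ℝ} {m n : WithTop ℕ∞} (hf : ContDiff ℝ n f)
    (hmn : m + 1 ≤ n) :
    ContDiff ℝ m (gradient f) :=
  (InnerProductSpace.toDual ℝ F).symm.toContinuousLinearEquiv.contDiff.comp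
    (hf.fderiv_right hmn)

section InnerProductSpace

variable {E F : Type*} [NormedAddCommGroup E] [InnerProductSpace ℝ E]
  [NormedAddCommGroup F] [InnerProductSpace ℝ F]

theorem inner_fderiv_apply_self_eq_zero_of_eventually_norm_eq {ν : E → F} {x : E}
    (hν : DifferentiableAt ℝ ν x) {r : ℝ} (hr : ∀ᶠ y in 𝓝 x, ‖ν y‖ = r) (ξ : E) :
    ⟪fderiv ℝ ν x ξ, ν x⟫ = 0 := by
  have hconst : HasFDerivAt (‖ν ·‖ ^ 2) (0 : E →L[ℝ] ℝ) x :=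
    (hasFDerivAt_const (r ^ 2) x).congr_of_eventuallyEq <| by
      filter_upwards [hr] with y hy
      rw [hy]
  have h := congrArg (· ξ) (hν.hasFDerivAt.norm_sq.unique hconst)
  simpa [real_inner_comm] using h

theorem Orthonormal.det_compression_ne_zero {n : ℕ} (hE : Module.finrank ℝ E = n + 1)
    {v : Fin (n + 1) → E} (hv : Orthonormal ℝ v) (L : E →ₗ[ℝ] E)
    (hL : ∀ ξ, ⟪L ξ, v (Fin.last n)⟫ = 0)
    (hinj : ∀ ξ, ⟪ξ, v (Fin.last n)⟫ = 0 → L ξ = 0 → ξ = 0) :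
    (Matrix.of fun i j : Fin n => ⟪L (v j.castSucc), v i.castSucc⟫).det ≠ 0 := by
  intro hdet
  obtain ⟨c, hc0, hc⟩ := Matrix.exists_mulVec_eq_zero_iff.mpr hdet
  set ξ := ∑ j, c j • v j.castSucc
  have hξ_tangent : ⟪ξ, v (Fin.last n)⟫ = 0 := by
    simp [ξ, sum_inner, real_inner_smul_left, hv.2 (Fin.castSucc_lt_last _).ne]
  have hLξ : L ξ = 0 := by
    let b := basisOfLinearIndependentOfCardEqFinrank hv.linearIndependent (by simp [hE])
    refine InnerProductSpace.ext_inner_left_basis b fun i => ?_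
    simp only [b, coe_basisOfLinearIndependentOfCardEqFinrank, inner_zero_right]
    refine Fin.lastCases ?_ (fun i => ?_) i
    · rw [real_inner_comm, hL]
    · simpa [ξ, Matrix.mulVec, dotProduct, inner_sum, real_inner_smul_right, real_inner_comm,
        mul_comm] using congrFun hc i
  have hli := hv.linearIndependent.comp Fin.castSucc (Fin.castSucc_injective n)
  exact hc0 (funext (Fintype.linearIndependent_iff.mp hli c (hinj ξ hξ_tangent hLξ)))

end InnerProductSpace

theorem statement7_general
    (n : ℕ) (f : EuclideanSpace ℝ (Fin (n + 1)) → ℝ)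
    (hf : ContDiff ℝ 2 f)
    (ν : EuclideanSpace ℝ (Fin (n + 1)) → EuclideanSpace ℝ (Fin (n + 1)))
    (hν : ∀ y, ν y = ‖gradient f y‖⁻¹ • gradient f y)
    (x : EuclideanSpace ℝ (Fin (n + 1))) (hx : gradient f x ≠ 0)
    -- invertibility of the Weingarten map on `T_xF_t = (∇f x)^⊥`:
    (hW : ∀ ξ : EuclideanSpace ℝ (Fin (n + 1)),
      ⟪ξ, gradient f x⟫ = 0 → (fderiv ℝ ν x) ξ = 0 → ξ = 0)
    -- a direct orthonormal frame `(v_0, …, v_{n-1}, v_n = ν_f x)`: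
    (v : Fin (n + 1) → EuclideanSpace ℝ (Fin (n + 1)))
    (hvON : Orthonormal ℝ v)
    (hvlast : v (Fin.last n) = ν x)
    -- the matrix of `d_xΨ_f` in the frame:
    (A : Matrix (Fin (n + 1)) (Fin (n + 1)) ℝ)
    (hA : ∀ i j, A i j =
      if (i : ℕ) < n then ⟪(fderiv ℝ ν x) (v j), v i⟫ else (fderiv ℝ f x) (v j))
    -- the matrix of the Weingarten map `d_xν_t` in the tangent frame:
    (B : Matrix (Fin n) (Fin n) ℝ)
    (hB : ∀ i j, B i j = ⟪(fderiv ℝ ν x) (v j.castSucc), v i.castSucc⟫) :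
    0 < A.det * B.det := by
  have hg : ContDiff ℝ 1 (gradient f) := hf.gradient (by norm_num)
  have hgx : gradient f x = ‖gradient f x‖ • v (Fin.last n) := by
    rw [hvlast, hν, smul_smul, mul_inv_cancel₀ (norm_ne_zero_iff.mpr hx), one_smul]
  have hνd : DifferentiableAt ℝ ν x := by
    rw [funext hν]
    have hgd := hg.differentiable one_ne_zero x
    exact ((hgd.norm ℝ hx).inv (norm_ne_zero_iff.mpr hx)).smul hgd
  have hν_unit : ∀ᶠ y in 𝓝 x, ‖ν y‖ = 1 := by
    filter_upwards [hg.continuous.continuousAt.eventually_ne hx] with y hy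
    rw [hν, norm_smul, norm_inv, norm_norm, inv_mul_cancel₀ (norm_ne_zero_iff.mpr hy)]
  have hA_last : A (Fin.last n) = Pi.single (Fin.last n) ‖gradient f x‖ := by
    ext j
    rw [hA, if_neg (by simp), ← inner_gradient_left]
    conv_lhs => rw [hgx, real_inner_smul_left, orthonormal_iff_ite.mp hvON]
    by_cases hj : j = Fin.last n <;> simp [hj, Ne.symm]
  have hA_sub : A.submatrix Fin.castSucc Fin.castSucc = B := by
    ext i j
    simp [hA, hB]
  have hB_det : B.det ≠ 0 := by
    have hB' : B = Matrix.of fun i j : Fin n =>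
        ⟪(fderiv ℝ ν x : _ →ₗ[ℝ] _) (v j.castSucc), v i.castSucc⟫ := Matrix.ext hB
    rw [hB']
    refine hvON.det_compression_ne_zero (by simp) _ (fun ξ => ?_) (fun ξ hξ => hW ξ ?_)
    · rw [hvlast]
      exact inner_fderiv_apply_self_eq_zero_of_eventually_norm_eq hνd hν_unit ξ
    · rw [hgx, real_inner_smul_right, hξ, mul_zero]
  rw [Matrix.det_eq_mul_det_submatrix_castSucc A hA_last, hA_sub, mul_assoc]
  exact mul_pos (norm_pos_iff.mpr hx) (mul_self_pos.mpr hB_det)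

/-- Let `f : ℝ^{n+1} → ℝ` be `C²`, `x` a regular point of `f` at which
the Weingarten map of the level set `F_t` (`t = f x`) is invertible, and `u = ν_f x`
with `ν_f = ∇f/‖∇f‖`.  Choose a direct orthonormal frame `(v_0, …, v_{n-1}, ν_f x)`
of `ℝ^{n+1}` (direct: positive determinant in the standard basis).  Let `A` be the
matrix of `d_xΨ_f` (where `Ψ_f = (ν_f, f)`) in this frame — rows `0,…,n-1` are the
components of `d_xν_f` on the tangent frame, the last row is `d_xf` — and let `B` be
the matrix of the Weingarten map `d_xν_t : T_xF_t → T_uS^n` in the frame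
`(v_0, …, v_{n-1})`.  Then `det A` and `det B` have the same sign, i.e.
`det A · det B > 0`; consequently the local degree of `Ψ_f` at `(u, t)` equals the
local degree of `ν_t` at `u` (both being the sign of the Jacobian determinant). -/
theorem statement7
    (n : ℕ) (f : EuclideanSpace ℝ (Fin (n + 1)) → ℝ)
    (hf : ContDiff ℝ 2 f)
    (ν : EuclideanSpace ℝ (Fin (n + 1)) → EuclideanSpace ℝ (Fin (n + 1)))
    (hν : ∀ y, ν y = ‖gradient f y‖⁻¹ • gradient f y)
    (x : EuclideanSpace ℝ (Fin (n + 1))) (hx : gradient f x ≠ 0)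
    -- invertibility of the Weingarten map on `T_xF_t = (∇f x)^⊥`:
    (hW : ∀ ξ : EuclideanSpace ℝ (Fin (n + 1)),
      ⟪ξ, gradient f x⟫ = 0 → (fderiv ℝ ν x) ξ = 0 → ξ = 0)
    -- a direct orthonormal frame `(v_0, …, v_{n-1}, v_n = ν_f x)`:
    (v : Fin (n + 1) → EuclideanSpace ℝ (Fin (n + 1)))
    (hvON : Orthonormal ℝ v)
    (hvlast : v (Fin.last n) = ν x)
    (hdirect : 0 < (Matrix.of fun i j : Fin (n + 1) => v j i).det)
    -- the matrix of `d_xΨ_f` in the frame: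
    (A : Matrix (Fin (n + 1)) (Fin (n + 1)) ℝ)
    (hA : ∀ i j, A i j =
      if (i : ℕ) < n then ⟪(fderiv ℝ ν x) (v j), v i⟫ else (fderiv ℝ f x) (v j))
    -- the matrix of the Weingarten map `d_xν_t` in the tangent frame:
    (B : Matrix (Fin n) (Fin n) ℝ)
    (hB : ∀ i j, B i j = ⟪(fderiv ℝ ν x) (v j.castSucc), v i.castSucc⟫) :
    0 < A.det * B.det :=
  statement7_general n f hf ν hν x hx hW v hvON hvlast A hA B hB
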